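/- Let X be a separable Fréchet space over 𝕂 (𝕂 = ℝ or ℂ) and p a non-trivial continuous seminorm on X. Then for every countable dense subset A of X there exists a subset B of A such that B is p-independent and dense in X. -/

import Mathlib

noncomputable section

/-- The kernel of a seminorm, as a linear subspace. -/
def semKer {𝕜 X : Type*} [RCLike 𝕜] [AddCommGroup X] [Module 𝕜 X]
    (p : Seminorm 𝕜 X) : Submodule 𝕜 X where
  carrier := {x | p x = 0}
  zero_mem' := map_zero p
  add_mem' := by
    intro a b ha hb
    simp only [Set.mem_setOf_eq] at *
    have h := map_add_le_add p a b
    have h2 := apply_nonneg p (a + b)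
    linarith
  smul_mem' := by
    intro c x hx
    simp only [Set.mem_setOf_eq] at *
    rw [map_smul_eq_mul, hx, mul_zero]

/-- `A` is `p`-independent: no nontrivial finite linear combination of distinct elements
of `A` lies in the kernel of the seminorm `p`. -/
def PIndep {𝕜 X : Type*} [RCLike 𝕜] [AddCommGroup X] [Module 𝕜 X]
    (p : Seminorm 𝕜 X) (A : Set X) : Prop :=
  ∀ s : Finset X, ↑s ⊆ A → s.Nonempty → ∀ z : X → 𝕜, (∀ a ∈ s, z a ≠ 0) →
    p (∑ a ∈ s, z a • a) ≠ 0

/-!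
Let `q : X → X ⧸ ker p`. For a finite set `t ⊆ X`, the subspace `q⁻¹ (span (q t))` is closed
(a finite-dimensional subspace of the Hausdorff quotient is closed) and proper (the quotient is
infinite-dimensional), hence has empty interior, so `A` minus it is still dense. Enumerate a
countable base `(V n)` of nonempty open sets and pick `b n ∈ A ∩ V n` with `q (b n)` outside the
span of `q (b 0), …, q (b (n-1))`. The `q (b n)` are linearly independent, which is exactly
`p`-independence of `{b n}`, and `{b n}` meets every `V n`, so it is dense.
-/

open Set Submodule TopologicalSpace

theorem exists_seq_mem_image_Iio {X : Type*} (T : ℕ → Set X → Set X)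
    (hT : ∀ n t, t.Finite → (T n t).Nonempty) :
    ∃ b : ℕ → X, ∀ n, b n ∈ T n (b '' Iio n) := by
  classical
  choose c hc using hT
  let history : ℕ → Finset X := fun n =>
    Nat.rec (motive := fun _ => Finset X) ∅ (fun k t => insert (c k (t : Set X) t.finite_toSet) t) n
  let b : ℕ → X := fun n => c n (history n : Set X) (history n).finite_toSet
  have history_eq : ∀ n, (history n : Set X) = b '' Iio n := by
    intro n
    induction n with
    | zero => simp [history]
    | succ n ih =>
      rw [← Order.succ_eq_add_one, Order.Iio_succ_eq_insert, image_insert_eq, ← ih]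
      exact Finset.coe_insert _ _
  exact ⟨b, fun n => history_eq n ▸ hc _ _ _⟩

theorem exists_denseRange_seq_mem_image_Iio {X : Type*} [TopologicalSpace X]
    [SecondCountableTopology X] [Nonempty X] (S : Set X → Set X)
    (hS : ∀ t, t.Finite → Dense (S t)) :
    ∃ b : ℕ → X, DenseRange b ∧ ∀ n, b n ∈ S (b '' Iio n) := by
  obtain ⟨B, hBc, hB_empty, hB⟩ := exists_countable_basis X
  have hBne : B.Nonempty := by
    by_contra h
    exact empty_ne_univ (by simpa [not_nonempty_iff_eq_empty.1 h] using hB.sUnion_eq)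
  obtain ⟨V, rfl⟩ := hBc.exists_eq_range hBne
  have hVne : ∀ n, (V n).Nonempty := fun n =>
    nonempty_iff_ne_empty.2 fun h => hB_empty (h ▸ mem_range_self n)
  obtain ⟨b, hb⟩ := exists_seq_mem_image_Iio (fun n t => V n ∩ S t) fun n t ht =>
    (hS t ht).inter_open_nonempty (V n) (hB.isOpen (mem_range_self n)) (hVne n)
  refine ⟨b, hB.dense_iff.2 ?_, fun n => (hb n).2⟩
  rintro _ ⟨n, rfl⟩ -
  exact ⟨b n, (hb n).1, mem_range_self n⟩

theorem linearIndependent_of_notMem_span_image_Iio {K V : Type*} [DivisionRing K]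
    [AddCommGroup V] [Module K V] {v : ℕ → V} (hv : ∀ n, v n ∉ span K (v '' Iio n)) :
    LinearIndependent K v := by
  have hIio : ∀ n, LinearIndepOn K v (Iio n) := by
    intro n
    induction n with
    | zero => simp
    | succ n ih =>
      rw [← Order.succ_eq_add_one, Order.Iio_succ_eq_insert,
        linearIndepOn_insert self_notMem_Iio]
      exact ⟨ih, hv n⟩
  rw [← linearIndepOn_univ_iff, ← iUnion_Iio]
  exact linearIndepOn_iUnion_of_directed monotone_Iio.directed_le hIio

theorem Dense.diff_of_isClosed_of_ne_top {𝕜 X : Type*} [NontriviallyNormedField 𝕜]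
    [AddCommGroup X] [Module 𝕜 X] [TopologicalSpace X] [ContinuousAdd X] [ContinuousSMul 𝕜 X]
    {A : Set X} (hA : Dense A) {M : Submodule 𝕜 X} (hM : IsClosed (M : Set X)) (hM_top : M ≠ ⊤) :
    Dense (A \ M) := by
  have : interior (M : Set X) = ∅ :=
    not_nonempty_iff_eq_empty.1 fun h => hM_top (M.eq_top_of_nonempty_interior' h)
  exact hA.inter_of_isOpen_right (interior_eq_empty_iff_dense_compl.1 this) hM.isOpen_compl

theorem Dense.diff_comap_mkQ_of_finiteDimensional {𝕜 X : Type*} [NontriviallyNormedField 𝕜]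
    [CompleteSpace 𝕜] [AddCommGroup X] [Module 𝕜 X] [TopologicalSpace X] [IsTopologicalAddGroup X]
    [ContinuousSMul 𝕜 X] {K : Submodule 𝕜 X} (hK : IsClosed (K : Set X))
    (hK_inf : ¬ FiniteDimensional 𝕜 (X ⧸ K)) {A : Set X} (hA : Dense A)
    (N : Submodule 𝕜 (X ⧸ K)) [FiniteDimensional 𝕜 N] :
    Dense (A \ N.comap K.mkQ) := by
  refine hA.diff_of_isClosed_of_ne_top (N.closed_of_finiteDimensional.preimage K.continuous_mkQ)
    fun h => hK_inf ?_
  have hN : N = ⊤ := comap_injective_of_surjective K.mkQ_surjective (h.trans (comap_top K.mkQ).symm)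
  exact Module.finite_def.2 (hN ▸ Module.Finite.iff_fg.1 ‹_›)

theorem pIndep_range_of_linearIndependent_mkQ {𝕜 X ι : Type*} [RCLike 𝕜] [AddCommGroup X]
    [Module 𝕜 X] (p : Seminorm 𝕜 X) {v : ι → X}
    (hv : LinearIndependent 𝕜 ((semKer p).mkQ ∘ v)) : PIndep p (range v) := by
  intro s hs ⟨a, ha⟩ z hz h0
  have hinj : Function.Injective v := Function.Injective.of_comp hv.injective
  have hsum : ∑ i ∈ s.preimage v hinj.injOn, z (v i) • v i = ∑ a ∈ s, z a • a :=
    Finset.sum_preimage v s hinj.injOn (fun a => z a • a) fun a ha h => (h (hs ha)).elim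
  have hzero : ∑ i ∈ s.preimage v hinj.injOn, z (v i) • (semKer p).mkQ (v i) = 0 := by
    simp only [← map_smul, ← map_sum, hsum]
    exact (Submodule.Quotient.mk_eq_zero _).2 h0
  obtain ⟨i, rfl⟩ := hs ha
  exact hz _ ha (linearIndependent_iff'.1 hv _ _ hzero i (by simpa using ha))

theorem secondCountableTopology_of_separableSpace (X : Type*) [TopologicalSpace X]
    [PseudoMetrizableSpace X] [SeparableSpace X] : SecondCountableTopology X :=
  letI := pseudoMetrizableSpaceUniformity X
  haveI := pseudoMetrizableSpaceUniformity_countably_generated X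
  UniformSpace.secondCountable_of_separable X

theorem exists_pIndep_dense_subset_general
    (𝕜 : Type*) [RCLike 𝕜] (X : Type*) [AddCommGroup X] [Module 𝕜 X]
    -- X is a separable Fréchet space: a complete metrizable locally convex TVS
    [UniformSpace X] [IsUniformAddGroup X] [ContinuousSMul 𝕜 X]
    [TopologicalSpace.MetrizableSpace X]
    [TopologicalSpace.SeparableSpace X]
    -- p is a non-trivial continuous seminorm on X
    (p : Seminorm 𝕜 X) (hp : Continuous p)
    (hptriv : ¬ FiniteDimensional 𝕜 (X ⧸ semKer p))
    -- A is a countable dense subset of X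
    (A : Set X) (hAd : Dense A) :
    ∃ B : Set X, B ⊆ A ∧ PIndep p B ∧ Dense B := by
  have := secondCountableTopology_of_separableSpace X
  have hker : IsClosed (semKer p : Set X) := isClosed_singleton.preimage hp
  set q := (semKer p).mkQ
  obtain ⟨b, hb_dense, hb⟩ := exists_denseRange_seq_mem_image_Iio
    (fun t => A \ (span 𝕜 (q '' t)).comap q) fun t ht =>
      have := FiniteDimensional.span_of_finite 𝕜 (ht.image q)
      hAd.diff_comap_mkQ_of_finiteDimensional hker hptriv _
  refine ⟨range b, range_subset_iff.2 fun n => (hb n).1,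
    pIndep_range_of_linearIndependent_mkQ p
      (linearIndependent_of_notMem_span_image_Iio fun n => ?_), hb_dense⟩
  rw [image_comp]
  exact (hb n).2

/-- Lemma lile: if `p` is a non-trivial continuous seminorm on a separable
Fréchet space `X` (i.e. `X / ker p` is infinite dimensional), then every countable dense
subset `A` of `X` contains a `p`-independent subset `B` which is still dense in `X`. -/
theorem exists_pIndep_dense_subset
    (𝕜 : Type*) [RCLike 𝕜] (X : Type*) [AddCommGroup X] [Module 𝕜 X]
    [Module ℝ X] [IsScalarTower ℝ 𝕜 X]
    -- X is a separable Fréchet space: a complete metrizable locally convex TVS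
    [UniformSpace X] [IsUniformAddGroup X] [ContinuousSMul 𝕜 X]
    [LocallyConvexSpace ℝ X] [CompleteSpace X] [TopologicalSpace.MetrizableSpace X]
    [TopologicalSpace.SeparableSpace X]
    -- p is a non-trivial continuous seminorm on X
    (p : Seminorm 𝕜 X) (hp : Continuous p)
    (hptriv : ¬ FiniteDimensional 𝕜 (X ⧸ semKer p))
    -- A is a countable dense subset of X
    (A : Set X) (hAc : A.Countable) (hAd : Dense A) :
    ∃ B : Set X, B ⊆ A ∧ PIndep p B ∧ Dense B :=
  exists_pIndep_dense_subset_general 𝕜 X p hp hptriv A hAd
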